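/- arXiv:2601.22049 — 6 statements merged into one kernel-verified Lean document; each statement's English description precedes it below -/
import Mathlib

section
/- Let n be a positive integer. Every matrix τ ∈ GL₂(Z/n) with det τ = -1 and tr τ = 0 is conjugate by an element of SL₂(Z/n) to one of the following matrices: diag(1,-1); or, if n is even, the matrix [[0,1],[1,0]]; or, if 4 divides n, the matrix [[1,2],[n/2,-1]]. -/
/-!
Write `τ = [[a, b], [c, -a]]`, so that `a² + bc = 1` and `τ² = 1`. By the Chinese remainder
theorem the odd part and the `2`-part of `n` can be treated separately.

If `2` is a unit in a local ring, one of `1 ± a` is a unit, and a column of `1 + τ` together with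
a column of `1 - τ` is a basis of eigenvectors for `±1`, which can be rescaled to determinant `1`:
for odd `n` every `τ` is conjugate to `diag(1, -1)`.

Over `ℤ/2^e`, if `c` (or `b`) is odd then `e₁` (or `e₂`) is a cyclic vector and `τ` is
conjugate to `[[0, 1], [1, 0]]`. Otherwise `a ≡ ±1 mod 4`, and the halves of the eigenvectors
used for odd `n` still form a basis, but are eigenvectors only up to an error in `2^(e-1)`.
Either this error can be removed, giving `diag(1, -1)`, or it leaves the twisted form
`[[1, 2], [2^(e-1), -1]]`.
-/

namespace ZMod

lemma even_or_odd {n : ℕ} (x : ZMod n) : Even x ∨ Odd x := by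
  obtain ⟨k, rfl⟩ := intCast_surjective x
  exact (Int.even_or_odd k).imp (·.map (Int.castRingHom _)) (·.map (Int.castRingHom _))

lemma two_pow_eq_zero (e : ℕ) : (2 : ZMod (2 ^ e)) ^ e = 0 := by
  exact_mod_cast natCast_self (2 ^ e)

lemma isUnit_of_odd {e : ℕ} {x : ZMod (2 ^ e)} (hx : Odd x) : IsUnit x := by
  obtain ⟨k, rfl⟩ := hx
  exact IsNilpotent.isUnit_add_one ⟨e, by rw [mul_pow, two_pow_eq_zero, zero_mul]⟩

lemma not_isUnit_two {e : ℕ} (he : e ≠ 0) : ¬IsUnit (2 : ZMod (2 ^ e)) := by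
  exact_mod_cast prime_natCast_not_isUnit_pow Nat.prime_two (Nat.pos_of_ne_zero he)

lemma isUnit_two_of_odd {m : ℕ} (hm : Odd m) : IsUnit (2 : ZMod m) := by
  exact_mod_cast (isUnit_iff_coprime 2 m).2 (Nat.coprime_two_left.2 hm)

lemma exists_eq_mul_of_mul_eq_zero {n k m : ℕ} (hn : k * m = n) (hk : k ≠ 0) {x : ZMod n}
    (hx : (k : ZMod n) * x = 0) : ∃ w, x = m * w := by
  subst hn
  obtain ⟨j, rfl⟩ := intCast_surjective x
  have hdvd : ((k * m : ℕ) : ℤ) ∣ k * j :=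
    (intCast_zmod_eq_zero_iff_dvd _ _).1 (by push_cast; exact hx)
  push_cast at hdvd
  obtain ⟨w, rfl⟩ := Int.dvd_of_mul_dvd_mul_left (by exact_mod_cast hk) hdvd
  exact ⟨w, by push_cast; ring⟩

lemma isLocalRing_prime_pow {p k : ℕ} [Fact p.Prime] (hk : k ≠ 0) :
    IsLocalRing (ZMod (p ^ k)) :=
  have : Fact (1 < p ^ k) := ⟨Nat.one_lt_pow hk (Fact.out : p.Prime).one_lt⟩
  IsLocalRing.of_surjective' (PadicInt.toZModPow k) (ringHom_surjective _)

lemma natCast_two_pow_succ_div_two (e : ℕ) :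
    ((2 ^ (e + 1) / 2 : ℕ) : ZMod (2 ^ (e + 1))) = 2 ^ e := by
  rw [pow_succ, Nat.mul_div_cancel _ two_pos, Nat.cast_pow, Nat.cast_ofNat]

lemma two_mul_natCast_div_two {n : ℕ} (hn : 2 ∣ n) : 2 * ((n / 2 : ℕ) : ZMod n) = 0 := by
  have h : ((2 * (n / 2) : ℕ) : ZMod n) = 0 := by rw [Nat.mul_div_cancel' hn, natCast_self]
  exact_mod_cast h

lemma natCast_mul_odd_div_two {n m : ℕ} (hn : 2 ∣ n) (hm : Odd m) :
    ((n * m / 2 : ℕ) : ZMod n) = ((n / 2 : ℕ) : ZMod n) := by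
  obtain ⟨k, rfl⟩ := hn
  obtain ⟨j, rfl⟩ := hm
  have hk : ((2 * k : ℕ) : ZMod (2 * k)) = 0 := natCast_self _
  rw [mul_assoc, Nat.mul_div_cancel_left _ two_pos, Nat.mul_div_cancel_left _ two_pos]
  push_cast at hk ⊢
  linear_combination j * hk

end ZMod

namespace TracelessInvolution

open Matrix

variable {R S : Type*} [CommRing R] [CommRing S]

def traceless (a b c : R) : Matrix (Fin 2) (Fin 2) R := !![a, b; c, -a]

def IsSLConj (A B : Matrix (Fin 2) (Fin 2) R) : Prop :=
  ∃ P : Matrix (Fin 2) (Fin 2) R, P.det = 1 ∧ A * P = P * B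

namespace IsSLConj

variable {A B C : Matrix (Fin 2) (Fin 2) R}

lemma refl (A : Matrix (Fin 2) (Fin 2) R) : IsSLConj A A :=
  ⟨1, det_one, by rw [mul_one, one_mul]⟩

lemma of_eq (h : A = B) : IsSLConj A B := h ▸ refl A

lemma trans (h₁ : IsSLConj A B) (h₂ : IsSLConj B C) : IsSLConj A C := by
  obtain ⟨P, hP, hAB⟩ := h₁
  obtain ⟨Q, hQ, hBC⟩ := h₂
  exact ⟨P * Q, by rw [det_mul, hP, hQ, one_mul], by
    rw [← mul_assoc, hAB, mul_assoc, hBC, mul_assoc]⟩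

lemma symm (h : IsSLConj A B) : IsSLConj B A := by
  obtain ⟨P, hP, hAB⟩ := h
  have hunit : IsUnit P.det := hP ▸ isUnit_one
  refine ⟨P⁻¹, by rw [det_nonsing_inv, hP, Ring.inverse_one], ?_⟩
  calc B * P⁻¹ = P⁻¹ * (A * P) * P⁻¹ := by
        rw [hAB, ← mul_assoc, nonsing_inv_mul _ hunit, one_mul]
    _ = P⁻¹ * A := by rw [mul_assoc, mul_assoc, mul_nonsing_inv _ hunit, mul_one]

lemma map (f : R →+* S) (h : IsSLConj A B) : IsSLConj (A.map f) (B.map f) := by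
  obtain ⟨P, hP, hAB⟩ := h
  refine ⟨P.map f, ?_, by rw [← Matrix.map_mul, ← Matrix.map_mul, hAB]⟩
  rw [← RingHom.mapMatrix_apply, ← RingHom.map_det, hP, map_one]

lemma exists_inv_mul_mul_eq (h : IsSLConj A B) :
    ∃ P : Matrix (Fin 2) (Fin 2) R, P.det = 1 ∧ P⁻¹ * A * P = B := by
  obtain ⟨P, hP, hAB⟩ := h
  refine ⟨P, hP, ?_⟩
  rw [mul_assoc, hAB, ← mul_assoc, nonsing_inv_mul P (hP ▸ isUnit_one), one_mul]

end IsSLConj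

lemma traceless_map (f : R →+* S) (a b c : R) :
    (traceless a b c).map f = traceless (f a) (f b) (f c) := by
  ext i j
  fin_cases i <;> fin_cases j <;> simp [traceless]

lemma map_sq_add_mul_eq_one (f : R →+* S) {a b c : R} (h : a ^ 2 + b * c = 1) :
    f a ^ 2 + f b * f c = 1 := by
  rw [← map_pow, ← map_mul, ← map_add, h, map_one]

lemma det_traceless (a b c : R) : (traceless a b c).det = -(a ^ 2 + b * c) := by
  rw [traceless, det_fin_two_of]; ring

lemma eq_traceless_of_trace_eq_zero {A : Matrix (Fin 2) (Fin 2) R} (h : A.trace = 0) :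
    A = traceless (A 0 0) (A 0 1) (A 1 0) := by
  rw [trace_fin_two] at h
  ext i j
  fin_cases i <;> fin_cases j <;> simp [traceless]
  linear_combination h

lemma isSLConj_traceless {a b c a' b' c' : R} (p q r s : R) (hdet : p * s - q * r = 1)
    (h₁₁ : a * p + b * r = p * a' + q * c') (h₁₂ : a * q + b * s = p * b' - q * a')
    (h₂₁ : c * p - a * r = r * a' + s * c') (h₂₂ : c * q - a * s = r * b' - s * a') :
    IsSLConj (traceless a b c) (traceless a' b' c') := by
  refine ⟨!![p, q; r, s], by rw [det_fin_two_of, hdet], ?_⟩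
  simp only [traceless, mul_fin_two, ← sub_eq_add_neg, neg_mul, mul_neg]
  rw [h₁₁, h₁₂, h₂₁, h₂₂]

lemma isSLConj_upper {a b c a' b' : R} (t : R) (ha : a' = a - t * c)
    (hb : b' = b + 2 * t * a - t ^ 2 * c) : IsSLConj (traceless a b c) (traceless a' b' c) :=
  isSLConj_traceless 1 t 0 1 (by ring) (by rw [ha]; ring) (by rw [ha, hb]; ring)
    (by rw [ha]; ring) (by rw [ha]; ring)

lemma isSLConj_lower {a b c a' c' : R} (s : R) (ha : a' = a + s * b)
    (hc : c' = c - 2 * s * a - s ^ 2 * b) : IsSLConj (traceless a b c) (traceless a' b c') :=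
  isSLConj_traceless 1 0 s 1 (by ring) (by rw [ha]; ring) (by rw [ha]; ring)
    (by rw [ha, hc]; ring) (by rw [ha]; ring)

lemma isSLConj_neg_swap (a b c : R) : IsSLConj (traceless a b c) (traceless (-a) (-c) (-b)) :=
  isSLConj_traceless 0 1 (-1) 0 (by ring) (by ring) (by ring) (by ring) (by ring)

/-- The columns of the witness are `(1 + τ) e₁` and `k • (1 - τ) e₂`. -/
lemma isSLConj_diag_of_mul_eq_one {a b c k : R} (hrel : a ^ 2 + b * c = 1)
    (hk : 2 * (1 + a) * k = 1) : IsSLConj (traceless a b c) (traceless 1 0 0) :=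
  isSLConj_traceless (1 + a) (-b * k) c ((1 + a) * k) (by linear_combination hk + k * hrel)
    (by linear_combination hrel) (by ring) (by ring) (by linear_combination -k * hrel)

lemma isSLConj_diag_of_isUnit_two [IsLocalRing R] {a b c : R} (h2 : IsUnit (2 : R))
    (hrel : a ^ 2 + b * c = 1) : IsSLConj (traceless a b c) (traceless 1 0 0) := by
  have hsum : (1 + a) + (1 - a) = 2 := by ring
  rcases IsLocalRing.isUnit_or_isUnit_of_isUnit_add (hsum ▸ h2) with hu | hu
  · obtain ⟨k, hk⟩ := (h2.mul hu).exists_right_inv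
    exact isSLConj_diag_of_mul_eq_one hrel hk
  · obtain ⟨k, hk⟩ := (h2.mul hu).exists_right_inv
    exact (isSLConj_neg_swap a b c).trans
      (isSLConj_diag_of_mul_eq_one (k := k) (by linear_combination hrel) (by linear_combination hk))

/-- The witness is `[e₁, τ e₁] * [[j + 1, -j], [-j, j + 1]]`; the second factor commutes with
`[[0, 1], [1, 0]]` and has determinant `2j + 1 = c⁻¹`. -/
lemma isSLConj_swap_of_mul_eq_one {a b c j : R} (hrel : a ^ 2 + b * c = 1)
    (hc : c * (2 * j + 1) = 1) : IsSLConj (traceless a b c) (traceless 0 1 1) :=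
  isSLConj_traceless (j + 1 - a * j) (-j + a * (j + 1)) (-c * j) (c * (j + 1))
    (by linear_combination hc) (by linear_combination -j * hrel)
    (by linear_combination (j + 1) * hrel) (by ring) (by ring)

lemma isSLConj_swap_of_odd {a b c : R} (hrel : a ^ 2 + b * c = 1) (hc : Odd c)
    (hu : IsUnit c) : IsSLConj (traceless a b c) (traceless 0 1 1) := by
  obtain ⟨k, rfl⟩ := hc
  obtain ⟨z, hz⟩ := hu.exists_right_inv
  exact isSLConj_swap_of_mul_eq_one (j := -k * z) hrel (by linear_combination (-2 * k) * hz)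

lemma isSLConj_twisted {h q : R} (hq : h = 2 * q) (h2 : 2 * h = 0) (hqh : q * h = 0) (y z : R) :
    IsSLConj (traceless (1 + h) (h * y) (h * z)) (traceless 1 2 h) :=
  (isSLConj_upper (q * y) (a' := 1 + h) (b' := 0) (by linear_combination (y * z) * hqh)
    (by linear_combination y * hq - y * h2 + (-2 * y + q * y ^ 2 * z) * hqh)).trans <|
  (isSLConj_lower (q * z) (a' := 1 + h) (c' := 0) (by ring)
    (by linear_combination -z * hq + 2 * z * hqh)).trans <|
  isSLConj_traceless ((1 + h) * (1 + q)) (1 + h) (-q) 1 (by linear_combination h2 - hq + 2 * hqh)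
    (by linear_combination (1 + h) * hqh) (by linear_combination (1 + h) * hq)
    (by linear_combination hqh - hq) (by linear_combination -hq)

/-- For `h = 2^(e-1)`, `q = 2^(e-2)` in `ℤ/2^e`: the witness of `isSLConj_diag_of_mul_eq_one`
with both columns halved. -/
lemma isSLConj_halved_eigenvectors {h q a₂ b₁ c₁ w z : R} (hq : h = 2 * q) (h2 : 2 * h = 0)
    (hqh : q * h = 0)
    (hw : 2 * a₂ + 4 * a₂ ^ 2 + b₁ * c₁ = q * w) (hz : (1 + 2 * a₂ + q * w) * z = 1) :
    IsSLConj (traceless (1 + 4 * a₂) (2 * b₁) (2 * c₁))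
      (traceless (1 + h * w) (h * w * b₁) (h * w * c₁)) :=
  isSLConj_traceless (1 + 2 * a₂) (-z * b₁) c₁ (z * (1 + 2 * a₂))
    (by linear_combination z * hw + hz)
    (by linear_combination (2 + h * w * z) * hw - w * hq + w ^ 2 * z * hqh
      - (a₂ * w + a₂ * w * z + 2 * a₂ ^ 2 * w * z) * h2)
    (by linear_combination -b₁ * w * (1 + a₂ - a₂ * z) * h2 + b₁ * w ^ 2 * z * hqh
      - b₁ * h * w * hz)
    (by linear_combination -c₁ * w * h2 - c₁ * h * w * hz + c₁ * w ^ 2 * z * hqh)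
    (by linear_combination (-2 * z - h * w) * hw + z * w * hq
      + (z * a₂ * w + a₂ * w + 2 * a₂ ^ 2 * w) * h2 - w ^ 2 * hqh)

lemma IsSLConj.of_map_fst_snd {A B : Matrix (Fin 2) (Fin 2) (R × S)}
    (h₁ : IsSLConj (A.map (RingHom.fst R S)) (B.map (RingHom.fst R S)))
    (h₂ : IsSLConj (A.map (RingHom.snd R S)) (B.map (RingHom.snd R S))) : IsSLConj A B := by
  obtain ⟨P₁, hP₁, h₁⟩ := h₁
  obtain ⟨P₂, hP₂, h₂⟩ := h₂
  let P : Matrix (Fin 2) (Fin 2) (R × S) := Matrix.of fun i j => (P₁ i j, P₂ i j)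
  have hP₁' : P.map (RingHom.fst R S) = P₁ := rfl
  have hP₂' : P.map (RingHom.snd R S) = P₂ := rfl
  refine ⟨P, Prod.ext ?_ ?_, ?_⟩
  · change RingHom.fst R S P.det = 1
    rw [RingHom.map_det, RingHom.mapMatrix_apply, hP₁', hP₁]
  · change RingHom.snd R S P.det = 1
    rw [RingHom.map_det, RingHom.mapMatrix_apply, hP₂', hP₂]
  · ext i j
    · change ((A * P).map (RingHom.fst R S)) i j = ((P * B).map (RingHom.fst R S)) i j
      rw [Matrix.map_mul, Matrix.map_mul, hP₁', h₁]
    · change ((A * P).map (RingHom.snd R S)) i j = ((P * B).map (RingHom.snd R S)) i j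
      rw [Matrix.map_mul, Matrix.map_mul, hP₂', h₂]

lemma isSLConj_of_coprime {m n : ℕ} (hco : m.Coprime n)
    {A B : Matrix (Fin 2) (Fin 2) (ZMod (m * n))}
    (h₁ : IsSLConj (A.map (ZMod.castHom (dvd_mul_right m n) (ZMod m)))
      (B.map (ZMod.castHom (dvd_mul_right m n) (ZMod m))))
    (h₂ : IsSLConj (A.map (ZMod.castHom (dvd_mul_left n m) (ZMod n)))
      (B.map (ZMod.castHom (dvd_mul_left n m) (ZMod n)))) : IsSLConj A B := by
  let e := ZMod.chineseRemainder hco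
  have hfst : ⇑(RingHom.fst _ _) ∘ ⇑e = ZMod.castHom (dvd_mul_right m n) (ZMod m) :=
    congrArg DFunLike.coe (RingHom.ext_zmod ((RingHom.fst _ _).comp e.toRingHom) _)
  have hsnd : ⇑(RingHom.snd _ _) ∘ ⇑e = ZMod.castHom (dvd_mul_left n m) (ZMod n) :=
    congrArg DFunLike.coe (RingHom.ext_zmod ((RingHom.snd _ _).comp e.toRingHom) _)
  have h := (IsSLConj.of_map_fst_snd (A := A.map e) (B := B.map e)
    (by rwa [Matrix.map_map, Matrix.map_map, hfst])
    (by rwa [Matrix.map_map, Matrix.map_map, hsnd])).map e.symm.toRingHom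
  have hid : ⇑e.symm ∘ ⇑e = id := funext e.symm_apply_apply
  rwa [Matrix.map_map, Matrix.map_map, RingEquiv.toRingHom_eq_coe, RingEquiv.coe_toRingHom, hid,
    Matrix.map_id, Matrix.map_id] at h

lemma isSLConj_diag_of_odd {m : ℕ} (hm : Odd m) (a b c : ZMod m) (hrel : a ^ 2 + b * c = 1) :
    IsSLConj (traceless a b c) (traceless 1 0 0) := by
  induction m using Nat.recOnPosPrimePosCoprime with
  | prime_pow p k hp hk =>
    have := Fact.mk hp
    have := ZMod.isLocalRing_prime_pow (p := p) hk.ne'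
    exact isSLConj_diag_of_isUnit_two (ZMod.isUnit_two_of_odd hm) hrel
  | zero => exact absurd hm Nat.not_odd_zero
  | one => exact .of_eq (Subsingleton.elim _ _)
  | coprime m n _ _ hco ihm ihn =>
    obtain ⟨hm', hn'⟩ := Nat.odd_mul.1 hm
    refine isSLConj_of_coprime hco ?_ ?_ <;> rw [traceless_map, traceless_map, map_one, map_zero]
    · exact ihm hm' _ _ _ (map_sq_add_mul_eq_one _ hrel)
    · exact ihn hn' _ _ _ (map_sq_add_mul_eq_one _ hrel)

def HasNormalForm {n : ℕ} (A : Matrix (Fin 2) (Fin 2) (ZMod n)) : Prop :=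
  IsSLConj A (traceless 1 0 0) ∨ (2 ∣ n ∧ IsSLConj A (traceless 0 1 1)) ∨
    (4 ∣ n ∧ IsSLConj A (traceless 1 2 ((n / 2 : ℕ) : ZMod n)))

lemma HasNormalForm.of_isSLConj {n : ℕ} {A B : Matrix (Fin 2) (Fin 2) (ZMod n)}
    (h : IsSLConj A B) (hB : HasNormalForm B) : HasNormalForm A :=
  hB.imp h.trans (Or.imp (And.imp_right h.trans) (And.imp_right h.trans))

def Classified (n : ℕ) : Prop :=
  ∀ a b c : ZMod n, a ^ 2 + b * c = 1 → HasNormalForm (traceless a b c)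

lemma hasNormalForm_of_even (e : ℕ) {a₂ b₁ c₁ : ZMod (2 ^ (e + 1))}
    (hrel : (1 + 4 * a₂) ^ 2 + 2 * b₁ * (2 * c₁) = 1) :
    HasNormalForm (traceless (1 + 4 * a₂) (2 * b₁) (2 * c₁)) := by
  rcases e with _ | _ | e
  · have h2 : (2 : ZMod (2 ^ (0 + 1))) = 0 := by linear_combination ZMod.two_pow_eq_zero (0 + 1)
    exact .inl (.of_eq (by
      congr 1 <;> [linear_combination 2 * a₂ * h2; linear_combination b₁ * h2;
        linear_combination c₁ * h2]))
  · have h4 : (4 : ZMod (2 ^ (0 + 1 + 1))) = 0 := by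
      linear_combination ZMod.two_pow_eq_zero (0 + 1 + 1)
    rw [show 1 + 4 * a₂ = 1 by linear_combination a₂ * h4]
    rcases ZMod.even_or_odd b₁ with ⟨β, rfl⟩ | ⟨β, rfl⟩
    · rw [show 2 * (β + β) = 0 by linear_combination β * h4]
      exact .inl (isSLConj_lower c₁ (by ring) (by ring))
    rcases ZMod.even_or_odd c₁ with ⟨γ, rfl⟩ | ⟨γ, rfl⟩
    · rw [show 2 * (γ + γ) = 0 by linear_combination γ * h4]
      exact .inl (isSLConj_upper (-(2 * β + 1)) (by ring) (by ring))
    · refine .inr (.inr ⟨dvd_rfl, .of_eq ?_⟩)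
      rw [ZMod.natCast_two_pow_succ_div_two]
      congr 1 <;> [linear_combination β * h4; linear_combination γ * h4]
  · have hzero := ZMod.two_pow_eq_zero (e + 1 + 1 + 1)
    set h : ZMod (2 ^ (e + 1 + 1 + 1)) := 2 ^ (e + 1 + 1) with hh
    set q : ZMod (2 ^ (e + 1 + 1 + 1)) := 2 ^ (e + 1) with hq'
    have hq : h = 2 * q := by rw [hh, hq']; ring
    have h2 : 2 * h = 0 := by rw [hh]; linear_combination hzero
    have hqh : q * h = 0 := by rw [hh, hq']; linear_combination 2 ^ e * hzero
    obtain ⟨w, hw⟩ := ZMod.exists_eq_mul_of_mul_eq_zero (k := 4) (m := 2 ^ (e + 1))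
      (x := 2 * a₂ + 4 * a₂ ^ 2 + b₁ * c₁) (by ring) (by norm_num)
      (by push_cast; linear_combination hrel)
    push_cast [← hq'] at hw
    have hodd : Odd (1 + 2 * a₂ + q * w) := ⟨a₂ + 2 ^ e * w, by rw [hq']; ring⟩
    obtain ⟨z, hz⟩ := (ZMod.isUnit_of_odd hodd).exists_right_inv
    refine .of_isSLConj (isSLConj_halved_eigenvectors hq h2 hqh hw hz) ?_
    rcases ZMod.even_or_odd w with ⟨ω, rfl⟩ | ⟨ω, rfl⟩
    · rw [show h * (ω + ω) = 0 by linear_combination ω * h2]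
      exact .inl (.of_eq (by simp))
    · rw [show h * (2 * ω + 1) = h by linear_combination ω * h2]
      refine .inr (.inr ⟨Dvd.intro (2 ^ (e + 1)) (by ring), ?_⟩)
      rw [ZMod.natCast_two_pow_succ_div_two]
      exact isSLConj_twisted hq h2 hqh b₁ c₁

lemma classified_two_pow (e : ℕ) : Classified (2 ^ e) := by
  intro a b c hrel
  rcases e with _ | e
  · exact .inl (.of_eq (Subsingleton.elim (α := Matrix (Fin 2) (Fin 2) (ZMod 1)) _ _))
  have h2 : 2 ∣ 2 ^ (e + 1) := dvd_pow_self 2 e.succ_ne_zero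
  rcases ZMod.even_or_odd c with hc | hc
  swap
  · exact .inr (.inl ⟨h2, isSLConj_swap_of_odd hrel hc (ZMod.isUnit_of_odd hc)⟩)
  rcases ZMod.even_or_odd b with hb | hb
  swap
  · exact .inr (.inl ⟨h2, (isSLConj_neg_swap a b c).trans <|
      isSLConj_swap_of_odd (by linear_combination hrel) hb.neg (ZMod.isUnit_of_odd hb.neg)⟩)
  obtain ⟨b₁, rfl⟩ := even_iff_two_dvd.1 hb
  obtain ⟨c₁, rfl⟩ := even_iff_two_dvd.1 hc
  rcases ZMod.even_or_odd a with ha | ⟨y, rfl⟩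
  · obtain ⟨x, rfl⟩ := even_iff_two_dvd.1 ha
    exact absurd (IsUnit.of_mul_eq_one (2 * x ^ 2 + 2 * b₁ * c₁) (by linear_combination hrel))
      (ZMod.not_isUnit_two e.succ_ne_zero)
  rcases ZMod.even_or_odd y with ⟨a₂, rfl⟩ | ⟨a₂, rfl⟩
  · rw [show 2 * (a₂ + a₂) + 1 = 1 + 4 * a₂ by ring]
    exact hasNormalForm_of_even e (by linear_combination hrel)
  · refine .of_isSLConj (isSLConj_neg_swap _ _ _) ?_
    rw [show -(2 * (2 * a₂ + 1) + 1) = 1 + 4 * (-a₂ - 1) by ring, ← mul_neg, ← mul_neg]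
    exact hasNormalForm_of_even e (by linear_combination hrel)

lemma classified_mul_odd {n m : ℕ} (hco : n.Coprime m) (hm : Odd m) (hn : Classified n) :
    Classified (n * m) := by
  intro a b c hrel
  let f := ZMod.castHom (dvd_mul_right n m) (ZMod n)
  have lift {a' b' c' : ZMod (n * m)} (hrel' : a' ^ 2 + b' * c' = 1)
      (h : IsSLConj (traceless (f a) (f b) (f c)) (traceless (f a') (f b') (f c'))) :
      IsSLConj (traceless a b c) (traceless a' b' c') := by
    refine isSLConj_of_coprime hco (by rwa [traceless_map, traceless_map]) ?_
    rw [traceless_map, traceless_map]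
    exact (isSLConj_diag_of_odd hm _ _ _ (map_sq_add_mul_eq_one _ hrel)).trans
      (isSLConj_diag_of_odd hm _ _ _ (map_sq_add_mul_eq_one _ hrel')).symm
  rcases hn _ _ _ (map_sq_add_mul_eq_one f hrel) with h | ⟨h2, h⟩ | ⟨h4, h⟩
  · exact .inl (lift (by ring) (by simpa using h))
  · exact .inr (.inl ⟨dvd_mul_of_dvd_left h2 m, lift (by ring) (by simpa using h)⟩)
  · have h2 : 2 ∣ n := (Dvd.intro 2 rfl).trans h4
    refine .inr (.inr ⟨dvd_mul_of_dvd_left h4 m, lift ?_ ?_⟩)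
    · linear_combination ZMod.two_mul_natCast_div_two (dvd_mul_of_dvd_left h2 m)
    · rwa [map_one, map_ofNat, map_natCast, ZMod.natCast_mul_odd_div_two h2 hm]

end TracelessInvolution

open TracelessInvolution

/-- Every `τ ∈ GL₂(ℤ/n)` with `det τ = -1` and `tr τ = 0` is conjugate
by an element of `SL₂(ℤ/n)` to `diag(1,-1)`, or (if `n` is even) to `[[0,1],[1,0]]`,
or (if `4 ∣ n`) to `[[1,2],[n/2,-1]]`. -/
theorem stmt8 (n : ℕ) (hn : 0 < n) (τ : Matrix (Fin 2) (Fin 2) (ZMod n))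
    (hdet : τ.det = -1) (htr : τ.trace = 0) :
    ∃ P : Matrix (Fin 2) (Fin 2) (ZMod n), P.det = 1 ∧
      (P⁻¹ * τ * P = !![1, 0; 0, -1] ∨
       (2 ∣ n ∧ P⁻¹ * τ * P = !![0, 1; 1, 0]) ∨
       (4 ∣ n ∧ P⁻¹ * τ * P = !![1, 2; ((n / 2 : ℕ) : ZMod n), -1])) := by
  have hτ := eq_traceless_of_trace_eq_zero htr
  have hrel : τ 0 0 ^ 2 + τ 0 1 * τ 1 0 = 1 := by
    have h := det_traceless (τ 0 0) (τ 0 1) (τ 1 0)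
    rw [← hτ, hdet] at h
    linear_combination h
  obtain ⟨e, m, hm, rfl⟩ := Nat.exists_eq_two_pow_mul_odd hn.ne'
  have hco : (2 ^ e).Coprime m := Nat.Coprime.pow_left _ (Nat.coprime_two_left.2 hm)
  have hnf := classified_mul_odd hco hm (classified_two_pow e) _ _ _ hrel
  rw [← hτ] at hnf
  rcases hnf with h | ⟨h2, h⟩ | ⟨h4, h⟩ <;>
    obtain ⟨P, hP, hPτ⟩ := h.exists_inv_mul_mul_eq
  · exact ⟨P, hP, .inl hPτ⟩
  · exact ⟨P, hP, .inr (.inl ⟨h2, by rw [hPτ, traceless, neg_zero]⟩)⟩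
  · exact ⟨P, hP, .inr (.inr ⟨h4, hPτ⟩)⟩
end

section
/- Let p be an odd prime and i ≥ 1. Every matrix τ ∈ GL₂(Z/p^i) with det τ = -1 and tr τ = 0 is conjugate by an element of SL₂(Z/p^i) to diag(1,-1). -/
/-!
Trace `0` and determinant `-1` give `τ ^ 2 = 1` by Cayley–Hamilton, so `(1 + τ) e₀` is a
`1`-eigenvector and `(1 - τ) e₁` a `-1`-eigenvector. For `τ = !![a, b; c, -a]` the matrix with
these two columns has determinant `2 (1 + a)`; when this is a unit, rescaling the first column puts
the change of basis in `SL₂`. In a local ring in which `2` is a unit, one of `1 + τ 0 0` and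
`1 + τ 1 1` is a unit, since they sum to `2`, and conjugating by the rotation `!![0, -1; 1, 0]`
swaps the two diagonal entries. Finally `ℤ/p^i` is local, being a quotient of `ℤ_[p]`.
-/

namespace Matrix

variable {R : Type*} [CommRing R]

theorem exists_det_eq_one_mul_eq_mul_diagonal_of_isUnit {a b c : R} (habc : a * a + b * c = 1)
    (hu : IsUnit (2 * (1 + a))) :
    ∃ P : Matrix (Fin 2) (Fin 2) R, P.det = 1 ∧
      !![a, b; c, -a] * P = P * !![1, 0; 0, -1] := by
  obtain ⟨e, he⟩ := hu.exists_right_inv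
  refine ⟨!![(1 + a) * e, -b; c * e, 1 + a], ?_, ?_⟩
  · rw [det_fin_two_of]
    linear_combination he + e * habc
  · simp only [mul_fin_two, EmbeddingLike.apply_eq_iff_eq, vecCons_inj, and_true]
    refine ⟨⟨?_, ?_⟩, ?_, ?_⟩
    · linear_combination e * habc
    · ring
    · ring
    · linear_combination -habc

theorem exists_det_eq_one_mul_eq_mul_diagonal_of_isUnit_one_add {τ : Matrix (Fin 2) (Fin 2) R}
    (hdet : τ.det = -1) (htr : τ.trace = 0) (hu : IsUnit (2 * (1 + τ 0 0))) :
    ∃ P : Matrix (Fin 2) (Fin 2) R, P.det = 1 ∧ τ * P = P * !![1, 0; 0, -1] := by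
  rw [trace_fin_two] at htr
  have hd : τ 1 1 = -τ 0 0 := by linear_combination htr
  rw [det_fin_two, hd] at hdet
  rw [eta_fin_two τ, hd]
  exact exists_det_eq_one_mul_eq_mul_diagonal_of_isUnit (by linear_combination -hdet) hu

theorem mul_rotation_eq_rotation_mul (τ : Matrix (Fin 2) (Fin 2) R) :
    τ * !![0, -1; 1, 0] = !![0, -1; 1, 0] * !![τ 1 1, -τ 1 0; -τ 0 1, τ 0 0] := by
  rw [eta_fin_two τ]
  simp

theorem exists_det_eq_one_inv_mul_mul_eq_diagonal [IsLocalRing R] (h2 : IsUnit (2 : R))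
    {τ : Matrix (Fin 2) (Fin 2) R} (hdet : τ.det = -1) (htr : τ.trace = 0) :
    ∃ P : Matrix (Fin 2) (Fin 2) R, P.det = 1 ∧ P⁻¹ * τ * P = !![1, 0; 0, -1] := by
  suffices ∃ P : Matrix (Fin 2) (Fin 2) R, P.det = 1 ∧ τ * P = P * !![1, 0; 0, -1] by
    obtain ⟨P, hP, hτP⟩ := this
    refine ⟨P, hP, ?_⟩
    rw [mul_assoc, hτP, ← mul_assoc, nonsing_inv_mul _ (by simp [hP]), one_mul]
  have hsum : (1 + τ 0 0) + (1 + τ 1 1) = 2 := by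
    rw [trace_fin_two] at htr
    linear_combination htr
  rcases IsLocalRing.isUnit_or_isUnit_of_isUnit_add (hsum ▸ h2) with hu | hu
  · exact exists_det_eq_one_mul_eq_mul_diagonal_of_isUnit_one_add hdet htr (h2.mul hu)
  · obtain ⟨P, hP, hτP⟩ := exists_det_eq_one_mul_eq_mul_diagonal_of_isUnit_one_add
      (τ := !![τ 1 1, -τ 1 0; -τ 0 1, τ 0 0])
      (by rw [det_fin_two_of, ← hdet, det_fin_two]; ring)
      (by rw [trace_fin_two_of, ← htr, trace_fin_two]; ring) (by simpa using h2.mul hu)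
    refine ⟨!![0, -1; 1, 0] * P, by rw [det_mul, det_fin_two_of, hP]; ring, ?_⟩
    rw [← mul_assoc, mul_rotation_eq_rotation_mul, mul_assoc, hτP, mul_assoc]

end Matrix

theorem ZMod.isLocalRing_prime_pow_s10 {p : ℕ} (hp : p.Prime) {i : ℕ} (hi : 1 ≤ i) :
    IsLocalRing (ZMod (p ^ i)) :=
  haveI := Fact.mk hp
  haveI : Nontrivial (ZMod (p ^ i)) :=
    ZMod.nontrivial_iff.mpr (Nat.one_lt_pow (by omega) hp.one_lt).ne'
  IsLocalRing.of_surjective' (PadicInt.toZModPow i) (ZMod.ringHom_surjective _)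

theorem ZMod.isUnit_two_prime_pow {p : ℕ} (hp : p.Prime) (hodd : p ≠ 2) (i : ℕ) :
    IsUnit (2 : ZMod (p ^ i)) := by
  have : Nat.Coprime 2 (p ^ i) :=
    ((Nat.coprime_primes Nat.prime_two hp).mpr hodd.symm).pow_right i
  simpa using (ZMod.isUnit_iff_coprime 2 (p ^ i)).mpr this

/-- For `p` an odd prime and `i ≥ 1`, every `τ ∈ GL₂(ℤ/p^i)` with
`det τ = -1` and `tr τ = 0` is conjugate by an element of `SL₂(ℤ/p^i)` to `diag(1,-1)`. -/
theorem stmt10 (p : ℕ) (hp : p.Prime) (hodd : p ≠ 2) (i : ℕ) (hi : 1 ≤ i)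
    (τ : Matrix (Fin 2) (Fin 2) (ZMod (p ^ i)))
    (hdet : τ.det = -1) (htr : τ.trace = 0) :
    ∃ P : Matrix (Fin 2) (Fin 2) (ZMod (p ^ i)), P.det = 1 ∧
      P⁻¹ * τ * P = !![1, 0; 0, -1] := by
  have := ZMod.isLocalRing_prime_pow_s10 hp hi
  exact Matrix.exists_det_eq_one_inv_mul_mul_eq_diagonal (ZMod.isUnit_two_prime_pow hp hodd i)
    hdet htr
end

section
/- Let F be an algebraically closed field, T = (Z/n)², ε a primitive n-th root of unity with char F ∤ n, and D the algebra generated by elements X_a, X_b subject to X_a^n = X_b^n = 1 and X_a X_b = ε X_b X_a (the Pauli algebra). Let τ ∈ GL₂(Z/n) and λ_a, λ_b ∈ F^×. If the assignment X_a ↦ λ_a X_{τ(a)}, X_b ↦ λ_b X_{τ(b)} extends to an anti-automorphism ψ of D (where X_g for g = αa+βb denotes the corresponding basis monomial and the grading is by T), then det τ = -1. -/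
/-!
In a twisted group algebra with cocycle `σ`, `X_u X_v = β(u, v) X_v X_u` with
`β(u, v) = σ(u, v) / σ(v, u)`. An anti-automorphism reverses products, so if it sends `X_u, X_v`
to multiples of `X_{u'}, X_{v'}` then `β(u', v') = β(u, v)⁻¹`. For the Pauli algebra
`β(u, v) = ε ^ det[u v]`, and `det[τa τb] = det τ · det[a b] = det τ`, so `ε ^ det τ = ε⁻¹`,
i.e. `det τ = -1` in `ℤ/n` because `ε` is a primitive `n`-th root of unity.
-/

section TwistedGroupAlgebra

variable {F D T : Type*} [Field F] [Ring D] [Algebra F D] [AddCommMagma T]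
  {X : Module.Basis T F D} {σ : T → T → F}

theorem Module.Basis.twisted_smul_mul_comm (hmul : ∀ u v, X u * X v = σ u v • X (u + v))
    (u v : T) : σ v u • (X u * X v) = σ u v • (X v * X u) := by
  rw [hmul, hmul, add_comm v u, smul_smul, smul_smul, mul_comm]

/-- With `β(u, v) = σ(u, v) / σ(v, u)`, this says `β(u', v') = β(u, v)⁻¹`. -/
theorem Module.Basis.cocycle_mul_eq_of_antimultiplicative
    (hmul : ∀ u v, X u * X v = σ u v • X (u + v))
    {ψ : D →ₗ[F] D} (hanti : ∀ x y, ψ (x * y) = ψ y * ψ x)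
    {u v u' v' : T} {μ ν : F} (hμ : μ ≠ 0) (hν : ν ≠ 0)
    (hu : ψ (X u) = μ • X u') (hv : ψ (X v) = ν • X v') :
    σ v u * σ v' u' = σ u v * σ u' v' := by
  have h := congrArg ψ (X.twisted_smul_mul_comm hmul u v)
  rw [map_smul, map_smul, hanti, hanti, hu, hv, smul_mul_smul_comm, smul_mul_smul_comm, hmul,
    hmul, add_comm v' u', smul_smul, smul_smul, smul_smul, smul_smul] at h
  have h' := smul_left_injective F (X.ne_zero (u' + v')) h
  apply mul_left_cancel₀ (mul_ne_zero hμ hν)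
  linear_combination h'

end TwistedGroupAlgebra

theorem IsPrimitiveRoot.natCast_eq_of_pow_eq_pow {F : Type*} [Field F] {ε : F} {n : ℕ}
    [NeZero n] (hε : IsPrimitiveRoot ε n) {a b : ℕ} (h : ε ^ a = ε ^ b) :
    (a : ZMod n) = b := by
  have hε0 : ε ≠ 0 := hε.ne_zero (NeZero.ne n)
  have h1 : ε ^ ((a : ℤ) - b) = 1 := by
    rw [zpow_sub₀ hε0, zpow_natCast, zpow_natCast, h, div_self (pow_ne_zero _ hε0)]
  rw [← sub_eq_zero, ← Int.cast_natCast, ← Int.cast_natCast b, ← Int.cast_sub,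
    ZMod.intCast_zmod_eq_zero_iff_dvd]
  exact (hε.zpow_eq_one_iff_dvd _).mp h1

/-- `X_u X_v = ε ^ pauliForm u v • X_v X_u` in the Pauli algebra. -/
def pauliForm {n : ℕ} (u v : Fin 2 → ZMod n) : ZMod n := u 0 * v 1 - u 1 * v 0

theorem pauliForm_mulVec {n : ℕ} (τ : Matrix (Fin 2) (Fin 2) (ZMod n)) (u v : Fin 2 → ZMod n) :
    pauliForm (τ.mulVec u) (τ.mulVec v) = τ.det * pauliForm u v := by
  simp only [pauliForm, Matrix.mulVec, dotProduct, Fin.sum_univ_two, Matrix.det_fin_two]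
  ring

theorem pauliForm_eq_neg_of_antimultiplicative {F D : Type*} [Field F] [Ring D] [Algebra F D]
    {n : ℕ} [NeZero n] {ε : F} (hε : IsPrimitiveRoot ε n)
    {X : Module.Basis (Fin 2 → ZMod n) F D}
    (hmul : ∀ u v, X u * X v = (ε ^ ((u 1).val * (v 0).val))⁻¹ • X (u + v))
    {ψ : D →ₗ[F] D} (hanti : ∀ x y, ψ (x * y) = ψ y * ψ x)
    {u v u' v' : Fin 2 → ZMod n} {μ ν : F} (hμ : μ ≠ 0) (hν : ν ≠ 0)
    (hu : ψ (X u) = μ • X u') (hv : ψ (X v) = ν • X v') :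
    pauliForm u' v' = -pauliForm u v := by
  have h := X.cocycle_mul_eq_of_antimultiplicative hmul hanti hμ hν hu hv
  rw [← mul_inv, ← mul_inv, inv_inj, ← pow_add, ← pow_add] at h
  have h' := hε.natCast_eq_of_pow_eq_pow h
  push_cast [ZMod.natCast_val, ZMod.cast_id] at h'
  simp only [pauliForm]
  linear_combination h'

theorem stmt12_general {F : Type*} [Field F] (n : ℕ) [NeZero n]
    (ε : F) (hε : IsPrimitiveRoot ε n)
    {D : Type*} [Ring D] [Algebra F D]
    (X : Module.Basis (Fin 2 → ZMod n) F D)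
    (hmul : ∀ u v : Fin 2 → ZMod n,
      (X u : D) * X v = (ε ^ ((u 1).val * (v 0).val))⁻¹ • X (u + v))
    (τ : Matrix (Fin 2) (Fin 2) (ZMod n))
    (lamA lamB : F) (ha : lamA ≠ 0) (hb : lamB ≠ 0)
    (ψ : D →ₗ[F] D)
    (hanti : ∀ x y : D, ψ (x * y) = ψ y * ψ x)
    (hψa : ψ (X ![1, 0]) = lamA • X (τ.mulVec ![1, 0]))
    (hψb : ψ (X ![0, 1]) = lamB • X (τ.mulVec ![0, 1])) :
    τ.det = -1 := by
  have h := pauliForm_eq_neg_of_antimultiplicative hε hmul hanti ha hb hψa hψb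
  have hab : pauliForm (n := n) ![1, 0] ![0, 1] = 1 := by simp [pauliForm]
  rwa [pauliForm_mulVec, hab, mul_one] at h

/-- Let `D = F^σ T` be the Pauli (twisted group) algebra on
`T = (ℤ/n)²`, with basis `X_t` and `X_u · X_v = ε^{-u₁·v₀} • X_{u+v}`. If the assignment
`X_a ↦ λ_a X_{τ(a)}`, `X_b ↦ λ_b X_{τ(b)}` (for `τ ∈ GL₂(ℤ/n)`, `λ_a, λ_b ∈ F^×`)
extends to an anti-automorphism `ψ` of `D`, then `det τ = -1`. -/
theorem stmt12 {F : Type*} [Field F] [IsAlgClosed F] (n : ℕ) [NeZero n]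
    (hchar : (n : F) ≠ 0) (ε : F) (hε : IsPrimitiveRoot ε n)
    {D : Type*} [Ring D] [Algebra F D]
    (X : Module.Basis (Fin 2 → ZMod n) F D)
    (hmul : ∀ u v : Fin 2 → ZMod n,
      (X u : D) * X v = (ε ^ ((u 1).val * (v 0).val))⁻¹ • X (u + v))
    (τ : Matrix (Fin 2) (Fin 2) (ZMod n)) (hτ : IsUnit τ.det)
    (lamA lamB : F) (ha : lamA ≠ 0) (hb : lamB ≠ 0)
    (ψ : D →ₗ[F] D) (hbij : Function.Bijective ψ)
    (hanti : ∀ x y : D, ψ (x * y) = ψ y * ψ x)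
    (hψa : ψ (X ![1, 0]) = lamA • X (τ.mulVec ![1, 0]))
    (hψb : ψ (X ![0, 1]) = lamB • X (τ.mulVec ![0, 1])) :
    τ.det = -1 :=
  stmt12_general n ε hε X hmul τ lamA lamB ha hb ψ hanti hψa hψb
end

section
/- Let F be an algebraically closed field, T = (Z/n)² with generators a, b, and D = F^σ T the twisted group algebra with X_a X_b = ε X_b X_a, X_a^n = X_b^n = 1, where ε is a primitive n-th root of unity. Let τ ∈ GL₂(Z/n) with det τ = -1, and λ_a, λ_b ∈ F^× with λ_a^n = σ(τ(a),τ(a))^{-n(n-1)/2} and λ_b^n = σ(τ(b),τ(b))^{-n(n-1)/2}. Then the assignment X_a ↦ λ_a X_{τ(a)}, X_b ↦ λ_b X_{τ(b)} extends to a τ-homogeneous anti-automorphism of D. -/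
/-!
Look for `ψ` of the form `X t ↦ c t • X (τ t)`. On basis elements, anti-multiplicativity says
`c (u + v) = c u * c v * ε ^ (u₁v₀ - (τv)₁(τu)₀)`. The exponent is bilinear in `(u, v)`, and
`det τ = -1` is exactly the condition that makes it symmetric. So `c` has to be a quadratic
refinement of a symmetric bicharacter on `(ℤ/n)²`. On `ℕ²` there is an obvious one,
`(i, j) ↦ λ_a ^ i λ_b ^ j ε ^ (α C(i,2) + β C(j,2) + γ i j)`. The conditions on `λ_a ^ n` and
`λ_b ^ n` are exactly what makes it `n`-periodic in each variable, so it descends to `(ℤ/n)²`.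
Since `τ` is invertible and `c` takes unit values, `ψ` is bijective.
-/

theorem Nat.add_choose_two (m k : ℕ) : (m + k).choose 2 = m.choose 2 + k.choose 2 + m * k := by
  have h : ((m + k).choose 2 : ℚ) = m.choose 2 + k.choose 2 + m * k := by
    push_cast [Nat.cast_choose_two]
    ring
  exact_mod_cast h

namespace AddChar

variable {M : Type*} [CommMonoid M] {n : ℕ}

theorem zmodChar_mul [NeZero n] {ζ : M} (hζ : ζ ^ n = 1) (a b : ZMod n) :
    zmodChar n hζ (a * b) = ζ ^ (a.val * b.val) := by
  rw [← zmodChar_apply' hζ, Nat.cast_mul, ZMod.natCast_zmod_val, ZMod.natCast_zmod_val]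

section QuadRefinement

variable (χ : AddChar (ZMod n) M) (a : ZMod n) (l : M)

def quadRefinementNat (m : ℕ) : M := l ^ m * χ (a * m.choose 2)

def quadRefinement (x : ZMod n) : M := χ.quadRefinementNat a l x.val

theorem quadRefinementNat_add (m k : ℕ) :
    χ.quadRefinementNat a l (m + k) =
      χ.quadRefinementNat a l m * χ.quadRefinementNat a l k * χ (a * m * k) := by
  simp only [quadRefinementNat, Nat.add_choose_two, pow_add, Nat.cast_add, Nat.cast_mul, mul_add,
    map_add_eq_mul]
  ac_rfl

variable {χ a l}

theorem quadRefinementNat_periodic (h : l ^ n * χ (a * n.choose 2) = 1) :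
    Function.Periodic (χ.quadRefinementNat a l) n := fun m => by
  have hn : χ.quadRefinementNat a l n = 1 := h
  rw [quadRefinementNat_add, hn, ZMod.natCast_self, mul_zero, map_zero_eq_one, mul_one, mul_one]

theorem quadRefinement_natCast (h : l ^ n * χ (a * n.choose 2) = 1) (m : ℕ) :
    χ.quadRefinement a l m = χ.quadRefinementNat a l m := by
  rw [quadRefinement, ZMod.val_natCast, (quadRefinementNat_periodic h).map_mod_nat]

theorem quadRefinement_add [NeZero n] (h : l ^ n * χ (a * n.choose 2) = 1) (x y : ZMod n) :
    χ.quadRefinement a l (x + y) =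
      χ.quadRefinement a l x * χ.quadRefinement a l y * χ (a * x * y) := by
  conv_lhs => rw [← ZMod.natCast_zmod_val x, ← ZMod.natCast_zmod_val y, ← Nat.cast_add,
    quadRefinement_natCast h, quadRefinementNat_add]
  simp only [quadRefinement, ZMod.natCast_zmod_val]

theorem quadRefinement_zero : χ.quadRefinement a l 0 = 1 := by
  simp [quadRefinement, quadRefinementNat]

theorem quadRefinement_one (h : l ^ n * χ (a * n.choose 2) = 1) :
    χ.quadRefinement a l 1 = l := by
  rw [← Nat.cast_one, quadRefinement_natCast h]
  simp [quadRefinementNat]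

theorem isUnit_quadRefinement [NeZero n] (h : l ^ n * χ (a * n.choose 2) = 1) (x : ZMod n) :
    IsUnit (χ.quadRefinement a l x) := by
  have hl : IsUnit l := (isUnit_pow_iff (NeZero.ne n)).mp (.of_mul_eq_one _ h)
  exact (hl.pow _).mul (χ.val_isUnit _)

end QuadRefinement

section QuadRefinement₂

variable (χ : AddChar (ZMod n) M) (α β γ : ZMod n) (la lb : M)

def quadRefinement₂ (u : Fin 2 → ZMod n) : M :=
  χ.quadRefinement α la (u 0) * χ.quadRefinement β lb (u 1) * χ (γ * u 0 * u 1)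

variable {χ α β γ la lb}

theorem quadRefinement₂_add [NeZero n] (ha : la ^ n * χ (α * n.choose 2) = 1)
    (hb : lb ^ n * χ (β * n.choose 2) = 1) (u v : Fin 2 → ZMod n) :
    χ.quadRefinement₂ α β γ la lb (u + v) =
      χ.quadRefinement₂ α β γ la lb u * χ.quadRefinement₂ α β γ la lb v *
        χ (α * u 0 * v 0 + β * u 1 * v 1 + γ * (u 0 * v 1 + u 1 * v 0)) := by
  have hγ : γ * (u 0 + v 0) * (u 1 + v 1) =
      γ * u 0 * u 1 + γ * v 0 * v 1 + γ * (u 0 * v 1 + u 1 * v 0) := by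
    ring
  simp only [quadRefinement₂, Pi.add_apply, quadRefinement_add ha, quadRefinement_add hb, hγ,
    map_add_eq_mul]
  grind

theorem quadRefinement₂_single_zero (ha : la ^ n * χ (α * n.choose 2) = 1) :
    χ.quadRefinement₂ α β γ la lb ![1, 0] = la := by
  simp [quadRefinement₂, quadRefinement_one ha, quadRefinement_zero]

theorem quadRefinement₂_single_one (hb : lb ^ n * χ (β * n.choose 2) = 1) :
    χ.quadRefinement₂ α β γ la lb ![0, 1] = lb := by
  simp [quadRefinement₂, quadRefinement_one hb, quadRefinement_zero]

theorem isUnit_quadRefinement₂ [NeZero n] (ha : la ^ n * χ (α * n.choose 2) = 1)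
    (hb : lb ^ n * χ (β * n.choose 2) = 1) (u : Fin 2 → ZMod n) :
    IsUnit (χ.quadRefinement₂ α β γ la lb u) :=
  ((isUnit_quadRefinement ha _).mul (isUnit_quadRefinement hb _)).mul (χ.val_isUnit _)

end QuadRefinement₂

end AddChar

namespace Module.Basis

variable {R A T : Type*} [CommRing R] [Ring A] [Algebra R A]

theorem map_mul_rev {B : Type*} [Ring B] [Algebra R B] (X : Basis T R A)
    (ψ : A →ₗ[R] B) (h : ∀ u v, ψ (X u * X v) = ψ (X v) * ψ (X u)) (x y : A) :
    ψ (x * y) = ψ y * ψ x := by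
  have hB : (LinearMap.mul R A).compr₂ ψ = (LinearMap.mul R B).flip.compl₁₂ ψ ψ :=
    LinearMap.ext_basis X X h
  exact LinearMap.congr_fun₂ hB x y

noncomputable def monomialEquiv (X : Basis T R A) (e : T ≃ T) (c : T → Rˣ) : A ≃ₗ[R] A :=
  X.equiv (X.unitsSMul fun s => c (e.symm s)) e

theorem monomialEquiv_apply (X : Basis T R A) (e : T ≃ T) (c : T → Rˣ) (t : T) :
    X.monomialEquiv e c (X t) = (c t : R) • X (e t) := by
  simp [monomialEquiv, Basis.equiv_apply, Basis.unitsSMul_apply, Units.smul_def]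

theorem monomialEquiv_map_mul_rev [AddCommMonoid T] (X : Basis T R A) (σ : T → T → R)
    (hmul : ∀ u v, X u * X v = σ u v • X (u + v)) (e : T ≃+ T) (c : T → Rˣ)
    (hc : ∀ u v, σ u v * c (u + v) = c v * c u * σ (e v) (e u)) (x y : A) :
    X.monomialEquiv e c (x * y) = X.monomialEquiv e c y * X.monomialEquiv e c x := by
  refine X.map_mul_rev (X.monomialEquiv e c).toLinearMap (fun u v => ?_) x y
  simp only [LinearEquiv.coe_coe, hmul, map_smul, monomialEquiv_apply, smul_mul_smul_comm]
  rw [smul_smul, smul_smul, hc, AddEquiv.coe_toEquiv, map_add, add_comm (e u)]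

end Module.Basis

theorem Matrix.mulVec_one_mul_mulVec_zero_of_det_eq_neg_one {R : Type*} [CommRing R]
    {τ : Matrix (Fin 2) (Fin 2) R} (hdet : τ.det = -1) (u v : Fin 2 → R) :
    τ.mulVec v 1 * τ.mulVec u 0 = u 1 * v 0 + τ 1 0 * τ 0 0 * u 0 * v 0
      + τ 1 1 * τ 0 1 * u 1 * v 1 + τ 1 1 * τ 0 0 * (u 0 * v 1 + u 1 * v 0) := by
  rw [Matrix.det_fin_two] at hdet
  simp only [Matrix.mulVec, dotProduct, Fin.sum_univ_two]
  linear_combination (-(u 1 * v 0)) * hdet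

theorem exists_units_twist_of_det_eq_neg_one {F : Type*} [Field F] {n : ℕ} [NeZero n] {ε : F}
    (hε : ε ^ n = 1) {τ : Matrix (Fin 2) (Fin 2) (ZMod n)} (hdet : τ.det = -1) {lamA lamB : F}
    (hla : lamA ^ n =
      (ε ^ ((τ.mulVec ![1, 0] 1).val * (τ.mulVec ![1, 0] 0).val)) ^ (n * (n - 1) / 2))
    (hlb : lamB ^ n =
      (ε ^ ((τ.mulVec ![0, 1] 1).val * (τ.mulVec ![0, 1] 0).val)) ^ (n * (n - 1) / 2)) :
    ∃ c : (Fin 2 → ZMod n) → Fˣ,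
      (∀ u v, (ε ^ ((u 1).val * (v 0).val))⁻¹ * c (u + v) =
        c v * c u * (ε ^ ((τ.mulVec v 1).val * (τ.mulVec u 0).val))⁻¹) ∧
      (c ![1, 0] : F) = lamA ∧ (c ![0, 1] : F) = lamB := by
  set χ := AddChar.zmodChar n hε
  have hperiod {l : F} {x : ZMod n} (h : l ^ n = χ (n.choose 2 * x)) :
      l ^ n * χ (-x * n.choose 2) = 1 := by
    rw [h, ← AddChar.map_add_eq_mul, neg_mul, mul_comm, add_neg_cancel, AddChar.map_zero_eq_one]
  simp only [← AddChar.zmodChar_mul hε, ← AddChar.map_nsmul_eq_pow, nsmul_eq_mul,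
    ← Nat.choose_two_right, Matrix.mulVec, dotProduct, Fin.sum_univ_two, Matrix.cons_val_zero,
    Matrix.cons_val_one, mul_one, mul_zero, add_zero, zero_add] at hla hlb
  have ha := hperiod hla
  have hb := hperiod hlb
  set q := χ.quadRefinement₂ (-(τ 1 0 * τ 0 0)) (-(τ 1 1 * τ 0 1)) (-(τ 1 1 * τ 0 0)) lamA lamB
  have hq (u v) : q (u + v) = q u * q v * _ := AddChar.quadRefinement₂_add ha hb u v
  refine ⟨fun u => (show IsUnit (q u) from AddChar.isUnit_quadRefinement₂ ha hb u).unit,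
    fun u v => ?_, AddChar.quadRefinement₂_single_zero ha, AddChar.quadRefinement₂_single_one hb⟩
  simp only [IsUnit.unit_spec, ← AddChar.zmodChar_mul hε, ← AddChar.map_neg_eq_inv, hq,
    Matrix.mulVec_one_mul_mulVec_zero_of_det_eq_neg_one hdet]
  rw [mul_comm (q v), mul_left_comm, ← AddChar.map_add_eq_mul]
  congr 2
  ring

theorem stmt13_general {F : Type*} [Field F] (n : ℕ) [NeZero n]
    (ε : F) (hε : IsPrimitiveRoot ε n)
    {D : Type*} [Ring D] [Algebra F D]
    (X : Module.Basis (Fin 2 → ZMod n) F D)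
    (hmul : ∀ u v : Fin 2 → ZMod n,
      (X u : D) * X v = (ε ^ ((u 1).val * (v 0).val))⁻¹ • X (u + v))
    (τ : Matrix (Fin 2) (Fin 2) (ZMod n)) (hdet : τ.det = -1)
    (lamA lamB : F)
    (hla : lamA ^ n =
      (ε ^ ((τ.mulVec ![1, 0] 1).val * (τ.mulVec ![1, 0] 0).val)) ^ (n * (n - 1) / 2))
    (hlb : lamB ^ n =
      (ε ^ ((τ.mulVec ![0, 1] 1).val * (τ.mulVec ![0, 1] 0).val)) ^ (n * (n - 1) / 2)) :
    ∃ ψ : D →ₗ[F] D, Function.Bijective ψ ∧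
      (∀ x y : D, ψ (x * y) = ψ y * ψ x) ∧
      ψ (X ![1, 0]) = lamA • X (τ.mulVec ![1, 0]) ∧
      ψ (X ![0, 1]) = lamB • X (τ.mulVec ![0, 1]) ∧
      ∀ t : Fin 2 → ZMod n, ∃ c : F, c ≠ 0 ∧ ψ (X t) = c • X (τ.mulVec t) := by
  obtain ⟨c, hc, hca, hcb⟩ := exists_units_twist_of_det_eq_neg_one hε.pow_eq_one hdet hla hlb
  have hτ : IsUnit τ.det := by rw [hdet]; exact isUnit_one.neg
  let e := (τ.toLinearEquiv' (τ.invertibleOfIsUnitDet hτ)).toAddEquiv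
  let ψ := X.monomialEquiv e c
  have hψ (t) : ψ (X t) = (c t : F) • X (τ.mulVec t) := X.monomialEquiv_apply _ c t
  refine ⟨ψ, ψ.bijective, X.monomialEquiv_map_mul_rev _ hmul e c hc, ?_, ?_,
    fun t => ⟨c t, (c t).ne_zero, hψ t⟩⟩
  · rw [LinearEquiv.coe_coe, hψ, hca]
  · rw [LinearEquiv.coe_coe, hψ, hcb]

/-- With `D = F^σ T` the Pauli algebra on `T = (ℤ/n)²`
(`X_u · X_v = ε^{-u₁·v₀} • X_{u+v}`, so `σ(g,g)^{-n(n-1)/2} = ε^{g₁·g₀·n(n-1)/2}`):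
given `τ ∈ GL₂(ℤ/n)` with `det τ = -1` and scalars with
`λ_a^n = σ(τa,τa)^{-n(n-1)/2}`, `λ_b^n = σ(τb,τb)^{-n(n-1)/2}`, the assignment
`X_a ↦ λ_a X_{τ(a)}`, `X_b ↦ λ_b X_{τ(b)}` extends to a `τ`-homogeneous
anti-automorphism of `D`. -/
theorem stmt13 {F : Type*} [Field F] [IsAlgClosed F] (n : ℕ) [NeZero n]
    (hchar : (n : F) ≠ 0) (ε : F) (hε : IsPrimitiveRoot ε n)
    {D : Type*} [Ring D] [Algebra F D]
    (X : Module.Basis (Fin 2 → ZMod n) F D)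
    (hmul : ∀ u v : Fin 2 → ZMod n,
      (X u : D) * X v = (ε ^ ((u 1).val * (v 0).val))⁻¹ • X (u + v))
    (τ : Matrix (Fin 2) (Fin 2) (ZMod n)) (hdet : τ.det = -1)
    (lamA lamB : F)
    (hla : lamA ^ n =
      (ε ^ ((τ.mulVec ![1, 0] 1).val * (τ.mulVec ![1, 0] 0).val)) ^ (n * (n - 1) / 2))
    (hlb : lamB ^ n =
      (ε ^ ((τ.mulVec ![0, 1] 1).val * (τ.mulVec ![0, 1] 0).val)) ^ (n * (n - 1) / 2)) :
    ∃ ψ : D →ₗ[F] D, Function.Bijective ψ ∧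
      (∀ x y : D, ψ (x * y) = ψ y * ψ x) ∧
      ψ (X ![1, 0]) = lamA • X (τ.mulVec ![1, 0]) ∧
      ψ (X ![0, 1]) = lamB • X (τ.mulVec ![0, 1]) ∧
      ∀ t : Fin 2 → ZMod n, ∃ c : F, c ≠ 0 ∧ ψ (X t) = c • X (τ.mulVec t) :=
  stmt13_general n ε hε X hmul τ hdet lamA lamB hla hlb
end

section
/- Let D be a central finite-dimensional graded-division algebra over an algebraically closed field F with abelian support T. If D admits a degree-preserving anti-automorphism or a degree-inverting anti-automorphism, then T is an elementary abelian 2-group. -/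
/-!
The identity component `D_1` is a finite-dimensional algebra over the algebraically closed field
`F` in which every nonzero element is invertible, so `D_1 = F`; multiplying by the inverse of a
nonzero element of `D_g` then shows that every `D_g` is a line. Hence homogeneous `x ∈ D_g`,
`y ∈ D_h` commute up to a scalar, `x y = c • y x`. The images of `x` and `y` under `ψ` are multiples
of `x, y` (degree-preserving case) or of `x⁻¹, y⁻¹` (degree-inverting case), which commute up to
the same scalar `c`; but `ψ` reverses products, so `c² = 1`. Thus `x²` commutes with every
homogeneous element, hence is central, hence lies in `D_1`, and its degree `t²` is `1`.
-/

open DirectSum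

theorem Subalgebra.eq_bot_of_isUnit {F D : Type*} [Field F] [IsAlgClosed F] [Ring D] [Algebra F D]
    [Algebra.IsIntegral F D] (S : Subalgebra F D) (hS : ∀ x ∈ S, x ≠ 0 → IsUnit x) : S = ⊥ := by
  nontriviality D
  have : NoZeroDivisors S := ⟨fun {a b} hab ↦ by
    by_contra! h
    refine h.2 (Subtype.ext ((hS a a.2 (by simpa using h.1)).mul_right_eq_zero.mp ?_))
    simpa using congrArg Subtype.val hab⟩
  have : IsDomain S := NoZeroDivisors.to_isDomain S
  have : Algebra.IsIntegral F S := ⟨fun x ↦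
    (isIntegral_algHom_iff S.val Subtype.val_injective).mp (Algebra.IsIntegral.isIntegral _)⟩
  refine eq_bot_iff.mpr fun x hx ↦ ?_
  obtain ⟨c, hc⟩ := (IsAlgClosed.algebraMap_bijective_of_isIntegral (k := F) (K := S)).2 ⟨x, hx⟩
  exact ⟨c, congrArg Subtype.val hc⟩

theorem Units.inv_mul_inv_eq_smul {F D : Type*} [CommSemiring F] [Semiring D] [Algebra F D]
    {u v : Dˣ} {c : F} (h : (u : D) * v = c • (v * u)) :
    (↑u⁻¹ : D) * ↑v⁻¹ = c • (↑v⁻¹ * ↑u⁻¹ : D) := by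
  calc (↑u⁻¹ : D) * ↑v⁻¹ = ↑v⁻¹ * ↑u⁻¹ * (u * v) * (↑u⁻¹ * ↑v⁻¹) := by simp [mul_assoc]
    _ = c • (↑v⁻¹ * ↑u⁻¹ : D) := by rw [h]; simp [mul_assoc]

theorem smul_mul_smul_eq_smul_of_mul_eq {F D : Type*} [CommSemiring F] [Semiring D] [Algebra F D]
    {x y : D} {c : F} (h : x * y = c • (y * x)) (a b : F) :
    (a • x) * (b • y) = c • ((b • y) * (a • x)) := by
  rw [smul_mul_smul_comm, smul_mul_smul_comm, h, smul_comm, mul_comm a b]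

theorem commute_mul_self_of_mul_eq_smul {F D : Type*} [CommSemiring F] [Semiring D] [Algebra F D]
    {x y : D} {c : F} (h : x * y = c • (y * x)) (hc : c * c = 1) : Commute (x * x) y :=
  calc x * x * y = c • (x * y * x) := by conv_lhs => rw [mul_assoc, h, mul_smul_comm, ← mul_assoc]
    _ = (c * c) • (y * x * x) := by rw [h, smul_mul_assoc, smul_smul]
    _ = y * (x * x) := by rw [hc, one_smul, mul_assoc]

theorem mul_self_eq_one_of_map_mul_rev {F D : Type*} [Field F] [Ring D] [Algebra F D]
    (ψ : D →ₗ[F] D) (hψ : ∀ x y, ψ (x * y) = ψ y * ψ x) {x y : D} {c : F}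
    (hxy : x * y = c • (y * x)) (hψxy : ψ x * ψ y = c • (ψ y * ψ x)) (hne : ψ y * ψ x ≠ 0) :
    c * c = 1 := by
  refine smul_left_injective F hne ?_
  calc (c * c) • (ψ y * ψ x) = c • ψ (y * x) := by rw [mul_smul, ← hψxy, hψ]
    _ = ψ y * ψ x := by rw [← map_smul, ← hxy, hψ]
    _ = (1 : F) • (ψ y * ψ x) := (one_smul F _).symm

structure IsGradedDivision {F T D : Type*} [Field F] [Group T] [Ring D] [Algebra F D]
    (𝒜 : T → Submodule F D) : Prop where
  one_mem : (1 : D) ∈ 𝒜 1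
  mul_mem : ∀ {g h : T} {x y : D}, x ∈ 𝒜 g → y ∈ 𝒜 h → x * y ∈ 𝒜 (g * h)
  isUnit : ∀ (g : T) (x : D), x ∈ 𝒜 g → x ≠ 0 → IsUnit x

namespace IsGradedDivision

variable {F T D : Type*} [Field F] [CommGroup T] [DecidableEq T] [Ring D] [Algebra F D]
  {𝒜 : T → Submodule F D} [Decomposition 𝒜]

theorem coe_decompose_mul_of_left_mem
    (hmul : ∀ {g h : T} {x y : D}, x ∈ 𝒜 g → y ∈ 𝒜 h → x * y ∈ 𝒜 (g * h))
    {g : T} {x : D} (hx : x ∈ 𝒜 g) (y : D) (k : T) :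
    (decompose 𝒜 (x * y) (g * k) : D) = x * decompose 𝒜 y k := by
  induction y using Decomposition.inductionOn 𝒜 with
  | zero => simp
  | @homogeneous j m =>
    by_cases hjk : j = k
    · subst hjk
      rw [decompose_of_mem_same 𝒜 (hmul hx m.2), decompose_coe, of_eq_same]
    · rw [decompose_of_mem_ne 𝒜 (hmul hx m.2) (mul_left_cancel.mt hjk),
        decompose_of_mem_ne 𝒜 m.2 hjk, mul_zero]
  | add y y' hy hy' => simp [mul_add, hy, hy']

theorem mem_of_mul_mem_of_isUnit
    (hmul : ∀ {g h : T} {x y : D}, x ∈ 𝒜 g → y ∈ 𝒜 h → x * y ∈ 𝒜 (g * h))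
    {g h : T} {x y : D} (hx : x ∈ 𝒜 g) (hu : IsUnit x) (hxy : x * y ∈ 𝒜 h) :
    y ∈ 𝒜 (g⁻¹ * h) := by
  classical
  have hcomp : ∀ k, k ≠ g⁻¹ * h → (decompose 𝒜 y k : D) = 0 := fun k hk ↦ by
    rw [← hu.mul_right_eq_zero, ← coe_decompose_mul_of_left_mem hmul hx]
    exact decompose_of_mem_ne 𝒜 hxy fun e ↦ hk (by rw [e]; group)
  rw [← sum_support_decompose 𝒜 y]
  refine Submodule.sum_mem _ fun k _ ↦ ?_
  obtain rfl | hk := eq_or_ne k (g⁻¹ * h)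
  · exact (decompose 𝒜 y _).2
  · rw [hcomp k hk]
    exact Submodule.zero_mem _

theorem inv_mem (h𝒜 : IsGradedDivision 𝒜) {g : T} {u : Dˣ} (hu : ↑u ∈ 𝒜 g) : ↑u⁻¹ ∈ 𝒜 g⁻¹ := by
  rw [← mul_one g⁻¹]
  exact mem_of_mul_mem_of_isUnit h𝒜.mul_mem hu u.isUnit (by simpa using h𝒜.one_mem)

theorem eq_one_of_forall_commute (hone : (1 : D) ∈ 𝒜 1)
    (hcentral : Subalgebra.center F D = ⊥) {g : T} {x : D} (hx : x ∈ 𝒜 g) (hx0 : x ≠ 0)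
    (hcomm : ∀ h, ∀ y ∈ 𝒜 h, Commute y x) : g = 1 := by
  have hcenter : x ∈ Subalgebra.center F D := Subalgebra.mem_center_iff.mpr fun y ↦ by
    induction y using Decomposition.inductionOn 𝒜 with
    | zero => simp
    | homogeneous m => exact hcomm _ _ m.2
    | add y y' hy hy' => rw [add_mul, mul_add, hy, hy']
  rw [hcentral, Algebra.mem_bot] at hcenter
  obtain ⟨c, rfl⟩ := hcenter
  refine degree_eq_of_mem_mem 𝒜 hx ?_ hx0
  rw [Algebra.algebraMap_eq_smul_one]
  exact Submodule.smul_mem _ c hone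

variable [IsAlgClosed F] [Algebra.IsIntegral F D]

theorem exists_smul_eq (h𝒜 : IsGradedDivision 𝒜) {g : T} {x y : D} (hx : x ∈ 𝒜 g) (hx0 : x ≠ 0)
    (hy : y ∈ 𝒜 g) : ∃ c : F, c • x = y := by
  obtain ⟨u, rfl⟩ := h𝒜.isUnit g x hx hx0
  have hz : ↑u⁻¹ * y ∈ 𝒜 1 := by
    rw [← inv_mul_cancel g]
    exact mem_of_mul_mem_of_isUnit h𝒜.mul_mem hx u.isUnit (by rwa [Units.mul_inv_cancel_left])
  have hbot := Subalgebra.eq_bot_of_isUnit ((𝒜 1).toSubalgebra h𝒜.one_mem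
    fun _ _ ↦ by simpa using h𝒜.mul_mem (g := 1) (h := 1)) fun z hz ↦ h𝒜.isUnit 1 z hz
  obtain ⟨c, hc⟩ : ↑u⁻¹ * y ∈ (⊥ : Subalgebra F D) := hbot ▸ hz
  refine ⟨c, ?_⟩
  change algebraMap F D c = _ at hc
  rw [Algebra.smul_def, Algebra.commutes, hc, Units.mul_inv_cancel_left]

theorem exists_mul_eq_smul_mul (h𝒜 : IsGradedDivision 𝒜) {g h : T} {x y : D} (hx : x ∈ 𝒜 g)
    (hy : y ∈ 𝒜 h) (hyx : y * x ≠ 0) : ∃ c : F, x * y = c • (y * x) := by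
  obtain ⟨c, hc⟩ := h𝒜.exists_smul_eq (h𝒜.mul_mem hy hx) hyx (mul_comm g h ▸ h𝒜.mul_mem hx hy)
  exact ⟨c, hc.symm⟩

theorem map_mul_map_eq_smul_of_map_eq (h𝒜 : IsGradedDivision 𝒜) {ψ : D →ₗ[F] D}
    (hψ : ∀ g, (𝒜 g).map ψ = 𝒜 g) {g h : T} {x y : D} {c : F} (hx : x ∈ 𝒜 g) (hx0 : x ≠ 0)
    (hy : y ∈ 𝒜 h) (hy0 : y ≠ 0) (hxy : x * y = c • (y * x)) :
    ψ x * ψ y = c • (ψ y * ψ x) := by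
  obtain ⟨a, ha⟩ := h𝒜.exists_smul_eq hx hx0 (hψ g ▸ Submodule.mem_map_of_mem hx)
  obtain ⟨b, hb⟩ := h𝒜.exists_smul_eq hy hy0 (hψ h ▸ Submodule.mem_map_of_mem hy)
  rw [← ha, ← hb]
  exact smul_mul_smul_eq_smul_of_mul_eq hxy a b

theorem map_mul_map_eq_smul_of_map_eq_inv (h𝒜 : IsGradedDivision 𝒜) {ψ : D →ₗ[F] D}
    (hψ : ∀ g, (𝒜 g).map ψ = 𝒜 g⁻¹) {g h : T} {x y : D} {c : F} (hx : x ∈ 𝒜 g) (hx0 : x ≠ 0)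
    (hy : y ∈ 𝒜 h) (hy0 : y ≠ 0) (hxy : x * y = c • (y * x)) :
    ψ x * ψ y = c • (ψ y * ψ x) := by
  have := nontrivial_of_ne x 0 hx0
  obtain ⟨u, rfl⟩ := h𝒜.isUnit g x hx hx0
  obtain ⟨v, rfl⟩ := h𝒜.isUnit h y hy hy0
  obtain ⟨a, ha⟩ := h𝒜.exists_smul_eq (h𝒜.inv_mem hx) u⁻¹.ne_zero
    (hψ g ▸ Submodule.mem_map_of_mem hx)
  obtain ⟨b, hb⟩ := h𝒜.exists_smul_eq (h𝒜.inv_mem hy) v⁻¹.ne_zero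
    (hψ h ▸ Submodule.mem_map_of_mem hy)
  rw [← ha, ← hb]
  exact smul_mul_smul_eq_smul_of_mul_eq (Units.inv_mul_inv_eq_smul hxy) a b

end IsGradedDivision

/-- A central finite-dimensional graded-division algebra over an
algebraically closed field with abelian support that admits a degree-preserving or a
degree-inverting anti-automorphism has elementary abelian 2-group support. -/
theorem stmt14 {F : Type*} [Field F] [IsAlgClosed F]
    {T : Type*} [CommGroup T] [DecidableEq T]
    {D : Type*} [Ring D] [Algebra F D] [FiniteDimensional F D]
    (𝒜 : T → Submodule F D) [DirectSum.Decomposition 𝒜]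
    (hone : (1 : D) ∈ 𝒜 1)
    (hmul : ∀ {g h : T} {x y : D}, x ∈ 𝒜 g → y ∈ 𝒜 h → x * y ∈ 𝒜 (g * h))
    (hdiv : ∀ (g : T) (x : D), x ∈ 𝒜 g → x ≠ 0 → IsUnit x)
    (hsupp : ∀ g : T, 𝒜 g ≠ ⊥)
    (hcentral : Subalgebra.center F D = ⊥)
    (ψ : D →ₗ[F] D) (hbij : Function.Bijective ψ)
    (hanti : ∀ x y : D, ψ (x * y) = ψ y * ψ x)
    (hhom : (∀ g : T, Submodule.map ψ (𝒜 g) = 𝒜 g) ∨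
            (∀ g : T, Submodule.map ψ (𝒜 g) = 𝒜 g⁻¹)) :
    ∀ t : T, t * t = 1 := by
  have h𝒜 : IsGradedDivision 𝒜 := ⟨hone, hmul, hdiv⟩
  intro t
  obtain ⟨x, hx, hx0⟩ := Submodule.exists_mem_ne_zero_of_ne_bot (hsupp t)
  have := nontrivial_of_ne x 0 hx0
  have hxu := hdiv t x hx hx0
  refine IsGradedDivision.eq_one_of_forall_commute hone hcentral (hmul hx hx)
    (hxu.mul hxu).ne_zero fun h y hy ↦ ?_
  obtain rfl | hy0 := eq_or_ne y 0
  · exact Commute.zero_left _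
  have hyu := hdiv h y hy hy0
  obtain ⟨c, hc⟩ := h𝒜.exists_mul_eq_smul_mul hx hy (hyu.mul hxu).ne_zero
  have hψ : ψ x * ψ y = c • (ψ y * ψ x) := by
    rcases hhom with hψ | hψ
    · exact h𝒜.map_mul_map_eq_smul_of_map_eq hψ hx hx0 hy hy0 hc
    · exact h𝒜.map_mul_map_eq_smul_of_map_eq_inv hψ hx hx0 hy hy0 hc
  have hne : ψ y * ψ x ≠ 0 := by
    rw [← hanti, ← map_zero ψ]
    exact hbij.injective.ne (hxu.mul hyu).ne_zero
  exact (commute_mul_self_of_mul_eq_smul hc (mul_self_eq_one_of_map_mul_rev ψ hanti hc hψ hne)).symm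
end

section
/- Let D be a graded-division algebra over a field F with support a group T, graded by an abelian group, and let V be a G-graded right D-module finite-dimensional over D with V ≠ 0. Let R = End_D(V) with its induced G-grading, and let V* = Hom_D(V, D) be the dual, viewed as a right R-module via ⟨fr, v⟩ = ⟨f, rv⟩. Then V* is a graded-simple right R-module: its only graded R-submodules are 0 and V*. -/
/-!
A nonzero graded submodule `W` of `V*` contains a nonzero homogeneous `f`, and `f` is nonzero
on some homogeneous `v₀`. Then `f v₀` is a nonzero homogeneous element of `D`, hence a unit, and
every `φ ∈ V*` factors as `φ = f ∘ r` through the rank-one endomorphism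
`r w = v₀ · (f v₀)⁻¹ φ w`. Since `W` is stable under composition with `End_D(V)`, `W = V*`.
-/

open MulOpposite

def dualComponent {F : Type*} [Field F] {G : Type*} [CommGroup G]
    {D : Type*} [Ring D] [Algebra F D]
    (𝒟 : G → Submodule F D)
    {V : Type*} [AddCommGroup V] [Module F V] [Module Dᵐᵒᵖ V]
    [SMulCommClass Dᵐᵒᵖ F D]
    (𝒱 : G → Submodule F V) (g : G) : Submodule F (V →ₗ[Dᵐᵒᵖ] D) where
  carrier := {f | ∀ (h : G), ∀ v ∈ 𝒱 h, f v ∈ 𝒟 (g * h)}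
  add_mem' := by
    intro f₁ f₂ h₁ h₂ h v hv
    simpa using (𝒟 (g * h)).add_mem (h₁ h v hv) (h₂ h v hv)
  zero_mem' := by intro h v hv; simp
  smul_mem' := by
    intro c f hf h v hv
    simpa using (𝒟 (g * h)).smul_mem c (hf h v hv)

theorem Submodule.exists_mem_inf_ne_zero_of_le_iSup {R M ι : Type*} [Semiring R]
    [AddCommMonoid M] [Module R M] {W : Submodule R M} {C : ι → Submodule R M}
    (hW : W ≤ ⨆ i, W ⊓ C i) (hW0 : W ≠ ⊥) : ∃ i, ∃ f ∈ W ⊓ C i, f ≠ 0 := by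
  by_contra! h
  refine hW0 (eq_bot_iff.2 (hW.trans (iSup_le fun i => ?_)))
  exact fun f hf => h i f hf

theorem DirectSum.exists_mem_apply_ne_zero {ι R M N Φ : Type*} [DecidableEq ι] [Semiring R]
    [AddCommMonoid M] [Module R M] [AddCommMonoid N] [FunLike Φ M N] [AddMonoidHomClass Φ M N]
    (ℳ : ι → Submodule R M) [DirectSum.Decomposition ℳ] {f : Φ} {m : M} (hm : f m ≠ 0) :
    ∃ i, ∃ x ∈ ℳ i, f x ≠ 0 := by
  by_contra! h
  refine hm (DirectSum.Decomposition.inductionOn ℳ (map_zero f) (fun x => h _ x x.2) ?_ m)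
  intro x y hx hy
  rw [map_add, hx, hy, add_zero]

theorem LinearMap.exists_comp_eq_of_isUnit_apply {D V : Type*} [Ring D] [AddCommMonoid V]
    [Module Dᵐᵒᵖ V] (f : V →ₗ[Dᵐᵒᵖ] D) {v₀ : V} (hv₀ : IsUnit (f v₀))
    (φ : V →ₗ[Dᵐᵒᵖ] D) : ∃ r : V →ₗ[Dᵐᵒᵖ] V, f.comp r = φ := by
  obtain ⟨u, hu⟩ := hv₀
  refine ⟨{ toFun := fun w => op ((↑u⁻¹ : D) * φ w) • v₀
            map_add' := fun x y => by simp [mul_add, op_add, add_smul]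
            map_smul' := fun a x => ?_ }, ?_⟩
  · induction a using MulOpposite.rec' with
    | h b => simp only [map_smul, RingHom.id_apply, op_smul_eq_mul, smul_smul, ← op_mul, mul_assoc]
  · ext w
    change f (op ((↑u⁻¹ : D) * φ w) • v₀) = φ w
    rw [map_smul, op_smul_eq_mul, ← hu, Units.mul_inv_cancel_left]

theorem stmt16_general {F : Type*} [Field F] {G : Type*} [CommGroup G] [DecidableEq G]
    {D : Type*} [Ring D] [Algebra F D]
    (𝒟 : G → Submodule F D)
    (hdiv : ∀ (g : G) (x : D), x ∈ 𝒟 g → x ≠ 0 → IsUnit x)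
    {V : Type*} [AddCommGroup V] [Module F V] [Module Dᵐᵒᵖ V]
    [SMulCommClass Dᵐᵒᵖ F D]
    (𝒱 : G → Submodule F V) [DirectSum.Decomposition 𝒱]
    (W : Submodule F (V →ₗ[Dᵐᵒᵖ] D))
    (hWR : ∀ f ∈ W, ∀ r : V →ₗ[Dᵐᵒᵖ] V, f.comp r ∈ W)
    (hWgr : W ≤ ⨆ g : G, W ⊓ dualComponent 𝒟 𝒱 g) :
    W = ⊥ ∨ W = ⊤ := by
  refine or_iff_not_imp_left.2 fun hW => eq_top_iff.2 fun φ _ => ?_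
  obtain ⟨g, f, ⟨hfW, hfg⟩, hf0⟩ := Submodule.exists_mem_inf_ne_zero_of_le_iSup hWgr hW
  obtain ⟨v, hv⟩ := DFunLike.ne_iff.1 hf0
  obtain ⟨h, v₀, hv₀, hfv₀⟩ := DirectSum.exists_mem_apply_ne_zero 𝒱 hv
  obtain ⟨r, rfl⟩ := f.exists_comp_eq_of_isUnit_apply (hdiv _ _ (hfg h v₀ hv₀) hfv₀) φ
  exact hWR f hfW r

/-- Let `D` be a graded-division algebra, `V ≠ 0` a graded right
`D`-module which is finite-dimensional over `D`, and `R = End_D(V)`. Then the dual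
`V* = Hom_D(V, D)`, as a right `R`-module via `f · r = f ∘ r`, is graded-simple: its
only graded `R`-submodules are `0` and everything. -/
theorem stmt16 {F : Type*} [Field F] {G : Type*} [CommGroup G] [DecidableEq G]
    {D : Type*} [Ring D] [Algebra F D]
    (𝒟 : G → Submodule F D) [DirectSum.Decomposition 𝒟]
    (hone : (1 : D) ∈ 𝒟 1)
    (hDmul : ∀ {g h : G} {x y : D}, x ∈ 𝒟 g → y ∈ 𝒟 h → x * y ∈ 𝒟 (g * h))
    (hdiv : ∀ (g : G) (x : D), x ∈ 𝒟 g → x ≠ 0 → IsUnit x)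
    {V : Type*} [AddCommGroup V] [Module F V] [Module Dᵐᵒᵖ V]
    [SMulCommClass Dᵐᵒᵖ F V] [SMulCommClass Dᵐᵒᵖ F D]
    [Module.Finite Dᵐᵒᵖ V] [Nontrivial V]
    (𝒱 : G → Submodule F V) [DirectSum.Decomposition 𝒱]
    (hVmod : ∀ {g h : G} (v : V) (d : D),
      v ∈ 𝒱 g → d ∈ 𝒟 h → (op d) • v ∈ 𝒱 (g * h))
    (W : Submodule F (V →ₗ[Dᵐᵒᵖ] D))
    (hWR : ∀ f ∈ W, ∀ r : V →ₗ[Dᵐᵒᵖ] V, f.comp r ∈ W)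
    (hWgr : W ≤ ⨆ g : G, W ⊓ dualComponent 𝒟 𝒱 g) :
    W = ⊥ ∨ W = ⊤ :=
  stmt16_general 𝒟 hdiv 𝒱 W hWR hWgr
end
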